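/- The maps +1∘ and (+1)⁻¹∘ of the extended adding machine (over alphabet {0,1,0̂,1̂}) generate the free inverse monoid on one generator: for every n ∈ ℕ, (+1)(+1)⁻¹((+1)⁻¹)ⁿ(+1)ⁿ ≠ ((+1)⁻¹)ⁿ(+1)ⁿ and (+1)⁻¹(+1)(+1)ⁿ((+1)⁻¹)ⁿ ≠ (+1)ⁿ((+1)⁻¹)ⁿ as partial maps on ({0,1,0̂,1̂})^ω. -/

import Mathlib

variable {Q A : Type*}

/-- The (partial) state reached after reading the first `n` letters of `ξ` from state `q`
in the deterministic partial automaton `δ`. -/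
def pstate (δ : Q → A → Option (A × Q)) (ξ : ℕ → A) (q : Q) : ℕ → Option Q
  | 0 => some q
  | n + 1 => (pstate δ ξ q n).bind fun s => (δ s (ξ n)).map Prod.snd

/-- The (partial) output letter at position `n` when reading `ξ` from state `q`. -/
def pout (δ : Q → A → Option (A × Q)) (ξ : ℕ → A) (q : Q) (n : ℕ) : Option A :=
  (pstate δ ξ q n).bind fun s => (δ s (ξ n)).map Prod.fst

open Classical in
/-- The partial action of a state `q` on an infinite word `ξ`. -/
noncomputable def pact (δ : Q → A → Option (A × Q)) (q : Q) (ξ : ℕ → A) : Option (ℕ → A) :=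
  if h : ∀ n, (pout δ ξ q n).isSome then some fun n => (pout δ ξ q n).get (h n) else none

/-- The partial action of a state sequence `q_n … q_1` (rightmost acting first). -/
noncomputable def pactW (δ : Q → A → Option (A × Q)) : List Q → (ℕ → A) → Option (ℕ → A)
  | [], ξ => some ξ
  | q :: w, ξ => (pactW δ w ξ).bind (pact δ q)

/-- The orbit `Q* ∘ ξ` of an infinite word. -/
def orbitP (δ : Q → A → Option (A × Q)) (ξ : ℕ → A) : Set (ℕ → A) :=
  {η | ∃ w : List Q, pactW δ w ξ = some η}

/-- The semigroup generated by the automaton: all partial maps on infinite words induced by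
nonempty state sequences. -/
def sgpP (δ : Q → A → Option (A × Q)) : Set ((ℕ → A) → Option (ℕ → A)) :=
  {F | ∃ w : List Q, w ≠ [] ∧ F = pactW δ w}

/-- The alphabet `{0, 1, 0̂, 1̂}`: `z = 0`, `o = 1`, `zh = 0̂`, `oh = 1̂`. -/
inductive Lam | z | o | zh | oh
deriving DecidableEq

/-- The two states `+1` and `+0` of the extended adding machine. -/
inductive ESt | one | zero
deriving DecidableEq

/-- The extended adding machine: `+1` on `1` outputs `0` staying in `+1`, on `0` outputs `1`
going to `+0`, on `0̂` outputs `1̂` going to `+0`, and is undefined on `1̂`; `+0` fixes every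
letter. -/
def deltaE : ESt → Lam → Option (Lam × ESt)
  | .one, .o => some (.z, .one)
  | .one, .z => some (.o, .zero)
  | .one, .zh => some (.oh, .zero)
  | .one, .oh => none
  | .zero, a => some (a, .zero)

/-- The inverse automaton of the extended adding machine. -/
def deltaEInv : ESt → Lam → Option (Lam × ESt)
  | .one, .z => some (.o, .one)
  | .one, .o => some (.z, .zero)
  | .one, .oh => some (.zh, .zero)
  | .one, .zh => none
  | .zero, a => some (a, .zero)

/-- The union of the extended adding machine and its inverse (`inl` = original states,
`inr` = inverse states), whose states act as mutually inverse partial maps on ω-words. -/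
def deltaETil : ESt ⊕ ESt → Lam → Option (Lam × (ESt ⊕ ESt))
  | .inl s, a => (deltaE s a).map fun x => (x.1, .inl x.2)
  | .inr s, a => (deltaEInv s a).map fun x => (x.1, .inr x.2)

/-- `+1` as a state of the combined automaton. -/
def plus : ESt ⊕ ESt := .inl .one

/-- `(+1)⁻¹` as a state of the combined automaton. -/
def minus : ESt ⊕ ESt := .inr .one

/-! The map `(+1)⁻¹` is undefined on `0ⁿ0̂0̂0̂…`, whereas `(+1)ⁿ` is defined there: it counts from
`0` to `n` in the first `n` binary digits (least significant first), and since `n < 2ⁿ` the carry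
never reaches the end-marker. Then `((+1)⁻¹)ⁿ` counts back down, so `((+1)⁻¹)ⁿ(+1)ⁿ` fixes this
word while `(+1)(+1)⁻¹((+1)⁻¹)ⁿ(+1)ⁿ` is undefined on it. The dual inequality is the same argument
with the roles of `+1` and `(+1)⁻¹`, of `0` and `1`, and of `0̂` and `1̂` exchanged. -/

section PartialAction

variable (δ : Q → A → Option (A × Q))

lemma pstate_cons_succ (a : A) (t : ℕ → A) (q : Q) (n : ℕ) :
    pstate δ (Stream'.cons a t) q (n + 1) = (δ q a).bind fun x => pstate δ t x.2 n := by
  induction n with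
  | zero =>
    change Option.map Prod.snd (δ q a) = _
    cases δ q a <;> rfl
  | succ n ih =>
    change (pstate δ (Stream'.cons a t) q (n + 1)).bind _ = _
    rw [ih]
    cases δ q a <;> rfl

lemma pout_cons_zero (a : A) (t : ℕ → A) (q : Q) :
    pout δ (Stream'.cons a t) q 0 = (δ q a).map Prod.fst :=
  rfl

lemma pout_cons_succ (a : A) (t : ℕ → A) (q : Q) (n : ℕ) :
    pout δ (Stream'.cons a t) q (n + 1) = (δ q a).bind fun x => pout δ t x.2 n := by
  unfold pout
  rw [pstate_cons_succ]
  cases δ q a <;> rfl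

lemma pact_eq_some_iff (q : Q) (ξ η : ℕ → A) :
    pact δ q ξ = some η ↔ ∀ n, pout δ ξ q n = some (η n) := by
  rw [pact]
  split_ifs with h
  · refine ⟨fun hη n => ?_, fun hη => ?_⟩
    · rw [← Option.some.inj hη, Option.some_get]
    · exact congrArg some (funext fun n => by simp [hη n])
  · exact iff_of_false (by simp) fun hη => h fun n => by simp [hη n]

lemma pact_eq_none_iff (q : Q) (ξ : ℕ → A) :
    pact δ q ξ = none ↔ ∃ n, pout δ ξ q n = none := by
  rw [pact]
  split_ifs with h <;> simpa [Option.isSome_iff_ne_none] using h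

lemma pact_eq_none_of_head {q : Q} {ξ : ℕ → A} (h : δ q (ξ 0) = none) :
    pact δ q ξ = none :=
  (pact_eq_none_iff δ q ξ).2 ⟨0, by simp [pout, pstate, h]⟩

lemma pact_cons (q : Q) (a : A) (t : ℕ → A) :
    pact δ q (Stream'.cons a t) =
      (δ q a).bind fun x => (pact δ x.2 t).map (Stream'.cons x.1) := by
  rcases hqa : δ q a with _ | ⟨b, s⟩
  · exact pact_eq_none_of_head δ hqa
  rw [Option.bind_some]
  rcases hst : pact δ s t with _ | η
  · obtain ⟨n, hn⟩ := (pact_eq_none_iff δ s t).1 hst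
    exact (pact_eq_none_iff δ q _).2 ⟨n + 1, by rw [pout_cons_succ, hqa]; exact hn⟩
  · have hη := (pact_eq_some_iff δ s t η).1 hst
    refine (pact_eq_some_iff δ q _ _).2 fun n => ?_
    cases n with
    | zero => rw [pout_cons_zero, hqa]; rfl
    | succ n => rw [pout_cons_succ, hqa]; exact hη n

lemma pact_eq_some_self {r : Q} (hr : ∀ x, δ r x = some (x, r)) (ξ : ℕ → A) :
    pact δ r ξ = some ξ := by
  have hstate : ∀ n, pstate δ ξ r n = some r := by
    intro n
    induction n with
    | zero => rfl
    | succ n ih => rw [pstate, ih, Option.bind_some, hr]; rfl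
  refine (pact_eq_some_iff δ r ξ ξ).2 fun n => ?_
  rw [pout, hstate, Option.bind_some, hr]
  rfl

lemma pactW_append (w₁ w₂ : List Q) (ξ : ℕ → A) :
    pactW δ (w₁ ++ w₂) ξ = (pactW δ w₂ ξ).bind (pactW δ w₁) := by
  induction w₁ with
  | nil =>
    rw [List.nil_append]
    cases pactW δ w₂ ξ <;> rfl
  | cons q w ih =>
    rw [List.cons_append, pactW, ih]
    cases pactW δ w₂ ξ <;> rfl

lemma pactW_replicate_of_succ (q : Q) (f : ℕ → ℕ → A) (m : ℕ)
    (hf : ∀ i < m, pact δ q (f i) = some (f (i + 1))) :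
    pactW δ (List.replicate m q) (f 0) = some (f m) := by
  induction m with
  | zero => rfl
  | succ m ih =>
    rw [List.replicate_succ, pactW, ih fun i hi => hf i (by omega), Option.bind_some]
    exact hf m (by omega)

lemma pactW_replicate_of_pred (q : Q) (f : ℕ → ℕ → A) (m : ℕ)
    (hf : ∀ i < m, pact δ q (f (i + 1)) = some (f i)) :
    pactW δ (List.replicate m q) (f m) = some (f 0) := by
  induction m with
  | zero => rfl
  | succ m ih =>
    rw [List.replicate_succ', pactW_append, pactW, pactW, Option.bind_some, hf m (by omega),
      Option.bind_some]
    exact ih fun i hi => hf i (by omega)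

end PartialAction

/-- The word of the `k` lowest binary digits of `n`, least significant first and written with
`a` for `0` and `b` for `1`, followed by the infinite word `t`. -/
def binWord (a b : A) : ℕ → ℕ → (ℕ → A) → ℕ → A
  | 0, _, t => t
  | k + 1, n, t => Stream'.cons (if n % 2 = 0 then a else b) (binWord a b k (n / 2) t)

section Odometer

variable {δ : Q → A → Option (A × Q)} {q r : Q} {a b : A}

lemma pact_binWord_succ (hqa : δ q a = some (b, r)) (hqb : δ q b = some (a, q))
    (hr : ∀ x, δ r x = some (x, r)) (t : ℕ → A) (k n : ℕ) (hn : n + 1 < 2 ^ k) :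
    pact δ q (binWord a b k n t) = some (binWord a b k (n + 1) t) := by
  induction k generalizing n with
  | zero => omega
  | succ k ih =>
    rw [pow_succ] at hn
    rcases Nat.mod_two_eq_zero_or_one n with hn2 | hn2
    · rw [binWord, binWord, if_pos hn2, if_neg (by omega), pact_cons, hqa, Option.bind_some,
        pact_eq_some_self δ hr, show (n + 1) / 2 = n / 2 by omega]
      rfl
    · rw [binWord, binWord, if_neg (by omega), if_pos (by omega), pact_cons, hqb,
        Option.bind_some, ih (n / 2) (by omega), show (n + 1) / 2 = n / 2 + 1 by omega]
      rfl

lemma pact_binWord_pred (hqb : δ q b = some (a, r)) (hqa : δ q a = some (b, q))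
    (hr : ∀ x, δ r x = some (x, r)) (t : ℕ → A) (k n : ℕ) (hn : n + 1 < 2 ^ k) :
    pact δ q (binWord a b k (n + 1) t) = some (binWord a b k n t) := by
  induction k generalizing n with
  | zero => omega
  | succ k ih =>
    rw [pow_succ] at hn
    rcases Nat.mod_two_eq_zero_or_one n with hn2 | hn2
    · rw [binWord, binWord, if_neg (by omega), if_pos hn2, pact_cons, hqb, Option.bind_some,
        pact_eq_some_self δ hr, show (n + 1) / 2 = n / 2 by omega]
      rfl
    · rw [binWord, binWord, if_pos (by omega), if_neg (by omega), pact_cons, hqa,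
        Option.bind_some, show (n + 1) / 2 = n / 2 + 1 by omega, ih (n / 2) (by omega)]
      rfl

lemma pact_binWord_zero_eq_none (hqa : δ q a = some (b, q)) {t : ℕ → A}
    (ht : pact δ q t = none) (k : ℕ) : pact δ q (binWord a b k 0 t) = none := by
  induction k with
  | zero => exact ht
  | succ k ih => rw [binWord, if_pos rfl, pact_cons, hqa, Option.bind_some, Nat.zero_div, ih]; rfl

/-- `q` is an odometer on the digits `a < b` and `q'` its inverse, which is undefined on the
letter `c`. -/
theorem pactW_replicate_ne_of_odometer {q' r' : Q} {c : A}
    (hqa : δ q a = some (b, r)) (hqb : δ q b = some (a, q)) (hr : ∀ x, δ r x = some (x, r))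
    (hq'b : δ q' b = some (a, r')) (hq'a : δ q' a = some (b, q'))
    (hr' : ∀ x, δ r' x = some (x, r')) (hq'c : δ q' c = none) (n : ℕ) :
    pactW δ ([q, q'] ++ List.replicate n q' ++ List.replicate n q) ≠
      pactW δ (List.replicate n q' ++ List.replicate n q) := by
  set t : ℕ → A := fun _ => c
  set ξ := binWord a b n 0 t
  have hcount : pactW δ (List.replicate n q) ξ = some (binWord a b n n t) :=
    pactW_replicate_of_succ δ q (binWord a b n · t) n fun i hi =>
      pact_binWord_succ hqa hqb hr t n i (by have := n.lt_two_pow_self; omega)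
  have hcountdown : pactW δ (List.replicate n q') (binWord a b n n t) = some ξ :=
    pactW_replicate_of_pred δ q' (binWord a b n · t) n fun i hi =>
      pact_binWord_pred hq'b hq'a hr' t n i (by have := n.lt_two_pow_self; omega)
  have hfix : pactW δ (List.replicate n q' ++ List.replicate n q) ξ = some ξ := by
    rw [pactW_append, hcount, Option.bind_some, hcountdown]
  have hundef : pact δ q' ξ = none :=
    pact_binWord_zero_eq_none hq'a (pact_eq_none_of_head δ (ξ := t) hq'c) n
  intro h
  have h_at_ξ := congrFun h ξ
  rw [List.append_assoc, pactW_append, hfix, Option.bind_some, pactW, pactW, pactW,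
    Option.bind_some, hundef] at h_at_ξ
  simp at h_at_ξ

end Odometer

/-- The maps `+1 ∘` and `(+1)⁻¹ ∘` of the extended adding machine generate the free inverse
monoid on one generator: for all `n`,
`(+1)(+1)⁻¹((+1)⁻¹)ⁿ(+1)ⁿ ≠ ((+1)⁻¹)ⁿ(+1)ⁿ` and
`(+1)⁻¹(+1)(+1)ⁿ((+1)⁻¹)ⁿ ≠ (+1)ⁿ((+1)⁻¹)ⁿ` as partial maps on ω-words. -/
theorem stmt18 :
    ∀ n : ℕ,
      pactW deltaETil ([plus, minus] ++ List.replicate n minus ++ List.replicate n plus) ≠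
        pactW deltaETil (List.replicate n minus ++ List.replicate n plus) ∧
      pactW deltaETil ([minus, plus] ++ List.replicate n plus ++ List.replicate n minus) ≠
        pactW deltaETil (List.replicate n plus ++ List.replicate n minus) := by
  have hzero : ∀ x, deltaETil (.inl .zero) x = some (x, .inl .zero) := by
    intro x; cases x <;> rfl
  have hzero' : ∀ x, deltaETil (.inr .zero) x = some (x, .inr .zero) := by
    intro x; cases x <;> rfl
  exact fun n =>
    ⟨pactW_replicate_ne_of_odometer (a := Lam.z) (b := .o) (c := .zh)
        rfl rfl hzero rfl rfl hzero' rfl n,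
      pactW_replicate_ne_of_odometer (a := Lam.o) (b := .z) (c := .oh)
        rfl rfl hzero' rfl rfl hzero rfl n⟩
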